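/- With G, K, L, F, φ, the vectors ξ_{yL}, the left regular representation λ, and the orthogonal projection P onto span{ξ_{yL} : y ∈ K} as in the context, for every s ∈ G one has ‖(1 − P) λ(s) P‖ ≤ √(|F △ Fs| / |F|) in operator norm, where △ denotes symmetric difference. -/

import Mathlib

open Pointwise
open scoped symmDiff InnerProductSpace

lemma lp_inner_eq_sum {G : Type*} (f g : lp (fun _ : G => ℂ) 2) (T : Finset G)
    (h : ∀ x, x ∉ T → (f : ∀ _ : G, ℂ) x = 0 ∨ (g : ∀ _ : G, ℂ) x = 0) :
    ⟪f, g⟫_ℂ = ∑ x ∈ T, (starRingEnd ℂ) ((f : ∀ _ : G, ℂ) x) * ((g : ∀ _ : G, ℂ) x) := by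
  rw [lp.inner_eq_tsum, tsum_eq_sum (s := T) ?_]
  · exact Finset.sum_congr rfl fun x _ => (RCLike.inner_apply _ _).trans (mul_comm _ _)
  · intro b hb; rcases h b hb with h | h <;> simp [RCLike.inner_apply, h]

lemma sqrt_sub_sqrt_sq_le {a b : ℝ} (ha : 0 ≤ a) (hb : 0 ≤ b) :
    (Real.sqrt a - Real.sqrt b) ^ 2 ≤ |a - b| := by
  wlog hab : b ≤ a generalizing a b
  · calc (Real.sqrt a - Real.sqrt b) ^ 2 = (Real.sqrt b - Real.sqrt a) ^ 2 := by ring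
      _ ≤ |b - a| := this hb ha (le_of_not_ge hab)
      _ = |a - b| := abs_sub_comm _ _
  rw [abs_of_nonneg (by linarith)]
  have h1 : Real.sqrt b * Real.sqrt b ≤ Real.sqrt a * Real.sqrt b :=
    mul_le_mul_of_nonneg_right (Real.sqrt_le_sqrt hab) (Real.sqrt_nonneg b)
  nlinarith [Real.sq_sqrt ha, Real.sq_sqrt hb, Real.sqrt_nonneg a, Real.sqrt_nonneg b]

lemma card_inter_abs_le {G : Type*} [DecidableEq G] (A B C : Finset G) :
    |((A ∩ B).card : ℝ) - ((A ∩ C).card : ℝ)| ≤ ((A ∩ (B ∆ C)).card : ℝ) := by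
  have key : ∀ B C : Finset G, (A ∩ B).card ≤ (A ∩ C).card + (A ∩ (B ∆ C)).card := by
    intro B C
    calc (A ∩ B).card ≤ ((A ∩ C) ∪ (A ∩ (B ∆ C))).card := by
          apply Finset.card_le_card
          intro x hx
          rw [Finset.mem_inter] at hx
          rcases hx with ⟨hxA, hxB⟩
          by_cases hC : x ∈ C
          · exact Finset.mem_union_left _ (Finset.mem_inter.2 ⟨hxA, hC⟩)
          · exact Finset.mem_union_right _
              (Finset.mem_inter.2 ⟨hxA, Finset.mem_symmDiff.2 (Or.inl ⟨hxB, hC⟩)⟩)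
      _ ≤ _ := Finset.card_union_le _ _
  rw [abs_sub_le_iff]
  constructor
  · have := (Nat.cast_le (α := ℝ)).2 (key B C); push_cast at this ⊢; linarith
  · have h := key C B
    rw [symmDiff_comm] at h
    have := (Nat.cast_le (α := ℝ)).2 h; push_cast at this ⊢; linarith

set_option maxHeartbeats 2000000 in
/-- With a tiling `G = KL`, `F ⊆ K` finite nonempty, `φ(x) = √(|K ∩ Fx|/|F|)`,
`ξ_{yL} = Σ_{x ∈ yL} φ(x) δ_x ∈ ℓ²(G;ℂ)`, `λ` the left regular representation, and
`P` the orthogonal projection onto `span{ξ_{yL} : y ∈ K}` (the sum of the rank-one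
projections onto the `ξ_{yL}`), one has `‖(1 − P)λ(s)P‖ ≤ √(|F ∆ Fs|/|F|)`. -/
theorem norm_one_sub_P_lreg_P_le {G : Type*} [Group G] [Countable G] [DecidableEq G]
    (K : Finset G) (L : Subgroup G) (hL : L.Normal) (hLfi : L.FiniteIndex)
    (hTile : ∀ g : G, ∃! p : K × L, (p.1 : G) * (p.2 : G) = g)
    (F : Finset G) (hFK : F ⊆ K) (hFne : F.Nonempty)
    (φ : G → ℝ)
    (hφ : ∀ x : G, φ x = Real.sqrt (((K ∩ F.image (· * x)).card : ℝ) / (F.card : ℝ)))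
    (ξ : G → lp (fun _ : G => ℂ) 2)
    (hξ : ∀ y : G, (ξ y : ∀ _ : G, ℂ) =
      Set.indicator (y • (L : Set G)) (fun x => (φ x : ℂ)))
    (lam : G → (lp (fun _ : G => ℂ) 2 →L[ℂ] lp (fun _ : G => ℂ) 2))
    (hlam : ∀ (s : G) (v : lp (fun _ : G => ℂ) 2) (x : G),
      (lam s v : ∀ _ : G, ℂ) x = (v : ∀ _ : G, ℂ) (s⁻¹ * x))
    (P : lp (fun _ : G => ℂ) 2 →L[ℂ] lp (fun _ : G => ℂ) 2)
    (hP : ∀ v, P v = ∑ y ∈ K, ⟪ξ y, v⟫_ℂ • ξ y)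
    (s : G) :
    ‖(1 - P) * lam s * P‖ ≤
      Real.sqrt (((symmDiff F (F.image (· * s))).card : ℝ) / (F.card : ℝ)) := by
  classical
  have hFpos : (0:ℝ) < F.card := by exact_mod_cast Finset.card_pos.mpr hFne
  -- the coset representative map κ : G → K
  have hκex : ∀ g : G, ∃ k : G, k ∈ K ∧ k⁻¹ * g ∈ L ∧ ∀ k' ∈ K, k'⁻¹ * g ∈ L → k' = k := by
    intro g
    obtain ⟨⟨k, l⟩, hp, hu⟩ := hTile g
    refine ⟨(k : G), k.2, ?_, ?_⟩
    · have h : (k : G) * (l : G) = g := hp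
      have : (k : G)⁻¹ * g = (l : G) := by rw [← h]; group
      rw [this]; exact l.2
    · intro k' hk' hl'
      have := hu (⟨k', hk'⟩, ⟨k'⁻¹ * g, hl'⟩) (by simp)
      exact congrArg (fun p => ((p.1 : K) : G)) this
  choose κ hκK hκL hκuniq using hκex
  have hκself : ∀ k ∈ K, κ k = k := by
    intro k hk
    exact (hκuniq k k hk (by simp [Subgroup.one_mem])).symm
  have hκκ : ∀ g, κ (κ g) = κ g := fun g => hκself _ (hκK g)
  have hmem' : ∀ y x : G, x ∈ y • (L : Set G) ↔ κ x = κ y := by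
    intro y x
    rw [Set.mem_smul_set_iff_inv_smul_mem, smul_eq_mul]
    constructor
    · intro h
      have h1 : (κ y)⁻¹ * x ∈ L := by
        have := mul_mem (hκL y) h
        simpa [mul_assoc] using this
      exact (hκuniq x (κ y) (hκK y) h1).symm
    · intro h
      have h1 : (κ y)⁻¹ * x ∈ L := h ▸ hκL x
      have h2 : y⁻¹ * (κ y) ∈ L := by simpa using inv_mem (hκL y)
      have := mul_mem h2 h1
      simpa [mul_assoc] using this
  -- coordinates of ξ
  have hξc : ∀ y x : G, (ξ y : ∀ _ : G, ℂ) x = if κ x = κ y then (φ x : ℂ) else 0 := by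
    intro y x
    rw [hξ]
    by_cases h : κ x = κ y
    · rw [Set.indicator_of_mem ((hmem' y x).2 h), if_pos h]
    · rw [Set.indicator_of_notMem (fun hx => h ((hmem' y x).1 hx)), if_neg h]
  -- support control
  have hWmem : ∀ (D : Finset G) (x : G), (K ∩ D.image (· * x)).Nonempty → x ∈ D⁻¹ * K := by
    rintro D x ⟨k, hk⟩
    rw [Finset.mem_inter] at hk
    obtain ⟨hkK, hkF⟩ := hk
    rw [Finset.mem_image] at hkF
    obtain ⟨f, hf, hfx⟩ := hkF
    have : x = f⁻¹ * k := by rw [← hfx]; group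
    rw [this]
    exact Finset.mul_mem_mul (Finset.inv_mem_inv hf) hkK
  set W : Finset G := F⁻¹ * K with hWdef
  have hφ0 : ∀ x, 0 ≤ φ x := fun x => (hφ x) ▸ Real.sqrt_nonneg _
  have hφsq : ∀ x, φ x ^ 2 = ((K ∩ F.image (· * x)).card : ℝ) / (F.card : ℝ) := by
    intro x
    rw [hφ]
    exact Real.sq_sqrt (div_nonneg (Nat.cast_nonneg _) (Nat.cast_nonneg _))
  have hφW : ∀ x, x ∉ W → φ x = 0 := by
    intro x hx
    by_contra h
    refine hx (hWmem F x ?_)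
    rw [Finset.nonempty_iff_ne_empty]
    intro he
    apply h
    rw [hφ, he]
    simp
  have hξ0 : ∀ y x, x ∉ W → (ξ y : ∀ _ : G, ℂ) x = 0 := by
    intro y x hx
    rw [hξc]
    simp [hφW x hx]
  -- the counting lemma
  have hcount : ∀ (D : Finset G) (y : G) (T : Finset G),
      (∀ x : G, κ x = κ y → (K ∩ D.image (· * x)).Nonempty → x ∈ T) →
      ∑ x ∈ T, (if κ x = κ y then (K ∩ D.image (· * x)).card else 0) = D.card := by
    intro D y T hT
    have hcard : ∀ x : G, (K ∩ D.image (· * x)).card = (D.filter (fun d => d * x ∈ K)).card := by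
      intro x
      rw [← Finset.card_image_of_injective (D.filter _) (mul_left_injective x)]
      congr 1
      ext k
      simp only [Finset.mem_inter, Finset.mem_image, Finset.mem_filter]
      constructor
      · rintro ⟨h1, f, hf, rfl⟩; exact ⟨f, ⟨hf, h1⟩, rfl⟩
      · rintro ⟨f, ⟨hf, h1⟩, rfl⟩; exact ⟨h1, f, hf, rfl⟩
    calc ∑ x ∈ T, (if κ x = κ y then (K ∩ D.image (· * x)).card else 0)
        = ∑ x ∈ T, ∑ d ∈ D, (if d * x ∈ K ∧ κ x = κ y then 1 else 0) := by
          refine Finset.sum_congr rfl fun x _ => ?_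
          by_cases h : κ x = κ y
          · rw [if_pos h, hcard, Finset.card_filter]
            exact Finset.sum_congr rfl fun d _ => by simp [h]
          · simp [h]
      _ = ∑ d ∈ D, ∑ x ∈ T, (if d * x ∈ K ∧ κ x = κ y then 1 else 0) := Finset.sum_comm
      _ = ∑ d ∈ D, 1 := ?_
      _ = D.card := by simp
    refine Finset.sum_congr rfl fun d hd => ?_
    rw [← Finset.card_filter]
    rw [Finset.card_eq_one]
    refine ⟨d⁻¹ * κ (d * y), ?_⟩
    have hx₀K : d * (d⁻¹ * κ (d * y)) ∈ K := by
      rw [mul_inv_cancel_left]; exact hκK (d * y)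
    have hx₀κ : κ (d⁻¹ * κ (d * y)) = κ y := by
      have h2 : (d * y)⁻¹ * κ (d * y) ∈ L := by simpa using inv_mem (hκL (d * y))
      have h3 := mul_mem (hκL y) h2
      have h4 : ((κ y)⁻¹ * y) * ((d * y)⁻¹ * κ (d * y)) = (κ y)⁻¹ * (d⁻¹ * κ (d * y)) := by
        group
      rw [h4] at h3
      exact (hκuniq _ (κ y) (hκK y) h3).symm
    ext x
    simp only [Finset.mem_filter, Finset.mem_singleton]
    constructor
    · rintro ⟨-, hx1, hx2⟩
      have e1 : κ (d * x) = d * x := hκself _ hx1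
      have e2 : y⁻¹ * x ∈ L := by
        have h5 : (κ y)⁻¹ * x ∈ L := hx2 ▸ hκL x
        have h6 : y⁻¹ * (κ y) ∈ L := by simpa using inv_mem (hκL y)
        have := mul_mem h6 h5
        simpa [mul_assoc] using this
      have e3 : κ (d * x) = κ (d * y) := by
        have h7 := mul_mem (hκL (d * y)) e2
        have h8 : ((κ (d * y))⁻¹ * (d * y)) * (y⁻¹ * x) = (κ (d * y))⁻¹ * (d * x) := by group
        rw [h8] at h7
        exact (hκuniq _ _ (hκK (d * y)) h7).symm
      have : d * x = κ (d * y) := e1 ▸ e3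
      rw [← this]
      group
    · rintro rfl
      refine ⟨hT _ hx₀κ ⟨d * (d⁻¹ * κ (d * y)), ?_⟩, hx₀K, hx₀κ⟩
      rw [Finset.mem_inter]
      exact ⟨hx₀K, Finset.mem_image.2 ⟨d, hd, rfl⟩⟩
  have hcountR : ∀ (D : Finset G) (y : G) (T : Finset G),
      (∀ x : G, κ x = κ y → (K ∩ D.image (· * x)).Nonempty → x ∈ T) →
      ∑ x ∈ T, (if κ x = κ y then ((K ∩ D.image (· * x)).card : ℝ) else 0) = (D.card : ℝ) := by
    intro D y T hT
    have := hcount D y T hT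
    calc ∑ x ∈ T, (if κ x = κ y then ((K ∩ D.image (· * x)).card : ℝ) else 0)
        = ((∑ x ∈ T, if κ x = κ y then (K ∩ D.image (· * x)).card else 0 : ℕ) : ℝ) := by
          push_cast [apply_ite (Nat.cast : ℕ → ℝ)]; rfl
      _ = (D.card : ℝ) := by rw [this]
  -- orthonormality of the ξ's
  have hinner_xi : ∀ y z : G, κ y ≠ κ z → ⟪ξ y, ξ z⟫_ℂ = 0 := by
    intro y z h
    rw [lp_inner_eq_sum _ _ ∅ ?_]
    · simp
    · intro x _
      by_cases hx : κ x = κ y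
      · right; rw [hξc]; exact if_neg fun hz => h (hx.symm.trans hz)
      · left; rw [hξc]; exact if_neg hx
  have hinner_xiK : ∀ y ∈ K, ∀ z ∈ K, y ≠ z → ⟪ξ y, ξ z⟫_ℂ = 0 := by
    intro y hy z hz hne
    refine hinner_xi y z fun h => hne ?_
    exact (hκself y hy).symm.trans (h.trans (hκself z hz))
  have hnorm_xi : ∀ y : G, ⟪ξ y, ξ y⟫_ℂ = 1 := by
    intro y
    rw [lp_inner_eq_sum _ _ W (fun x hx => Or.inl (hξ0 y x hx))]
    have hterm : ∀ x ∈ W, (starRingEnd ℂ) ((ξ y : ∀ _ : G, ℂ) x) * ((ξ y : ∀ _ : G, ℂ) x)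
        = (((if κ x = κ y then φ x ^ 2 else 0 : ℝ)) : ℂ) := by
      intro x _
      rw [hξc]
      by_cases h : κ x = κ y
      · simp only [if_pos h, Complex.ofReal_pow]
        rw [Complex.conj_ofReal]; ring
      · simp [h]
    rw [Finset.sum_congr rfl hterm, ← Complex.ofReal_sum]
    have hR : ∑ x ∈ W, (if κ x = κ y then φ x ^ 2 else 0) = 1 := by
      have hc := hcountR F y W (fun x _ hne => hWmem F x hne)
      calc ∑ x ∈ W, (if κ x = κ y then φ x ^ 2 else 0)
          = ∑ x ∈ W, (if κ x = κ y then ((K ∩ F.image (· * x)).card : ℝ) else 0) / (F.card : ℝ) := by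
            refine Finset.sum_congr rfl fun x _ => ?_
            rw [apply_ite (· / (F.card : ℝ))]
            simp only [zero_div]
            by_cases h : κ x = κ y <;> simp [h, hφsq]
        _ = (∑ x ∈ W, if κ x = κ y then ((K ∩ F.image (· * x)).card : ℝ) else 0) / (F.card : ℝ) := by
            rw [Finset.sum_div]
        _ = (F.card : ℝ) / (F.card : ℝ) := by rw [hc]
        _ = 1 := div_self (ne_of_gt hFpos)
    rw [hR, Complex.ofReal_one]
  -- P fixes each ξ y, y ∈ K
  have hPxi : ∀ y ∈ K, P (ξ y) = ξ y := by
    intro y hy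
    rw [hP, Finset.sum_eq_single y]
    · rw [hnorm_xi, one_smul]
    · intro z hz hne
      rw [hinner_xiK z hz y hy hne, zero_smul]
    · intro h; exact absurd hy h
  -- the key quadratic identity for 1 - P
  have hxiPw : ∀ (w : lp (fun _ : G => ℂ) 2), ∀ y ∈ K, ⟪ξ y, P w⟫_ℂ = ⟪ξ y, w⟫_ℂ := by
    intro w y hy
    rw [hP, inner_sum, Finset.sum_eq_single y]
    · rw [inner_smul_right, hnorm_xi, mul_one]
    · intro z hz hne
      rw [inner_smul_right, hinner_xiK y hy z hz (Ne.symm hne), mul_zero]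
    · intro h; exact absurd hy h
  have hA : ∀ (w : lp (fun _ : G => ℂ) 2),
      ⟪w, P w⟫_ℂ = ((∑ y ∈ K, ‖⟪ξ y, w⟫_ℂ‖ ^ 2 : ℝ) : ℂ) := by
    intro w
    rw [hP, inner_sum, Complex.ofReal_sum]
    refine Finset.sum_congr rfl fun y _ => ?_
    rw [inner_smul_right, ← inner_conj_symm (ξ y) w, RCLike.conj_mul (K := ℂ), RCLike.norm_conj]
    norm_cast
  have hB : ∀ (w : lp (fun _ : G => ℂ) 2),
      ⟪P w, P w⟫_ℂ = ((∑ y ∈ K, ‖⟪ξ y, w⟫_ℂ‖ ^ 2 : ℝ) : ℂ) := by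
    intro w
    have h1 : ⟪P w, P w⟫_ℂ = ∑ y ∈ K, (starRingEnd ℂ) ⟪ξ y, w⟫_ℂ * ⟪ξ y, P w⟫_ℂ := by
      conv_lhs => rw [hP]
      rw [sum_inner]
      exact Finset.sum_congr rfl fun y _ => by rw [inner_smul_left, ← hP]
    rw [h1, Complex.ofReal_sum]
    refine Finset.sum_congr rfl fun y hy => ?_
    rw [hxiPw w y hy, RCLike.conj_mul (K := ℂ)]
    norm_cast
  have hcontract : ∀ (w : lp (fun _ : G => ℂ) 2),
      ‖w - P w‖ ^ 2 = ‖w‖ ^ 2 - ∑ y ∈ K, ‖⟪ξ y, w⟫_ℂ‖ ^ 2 := by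
    intro w
    have h0 := @norm_sub_sq ℂ _ _ _ _ w (P w)
    have h2 : RCLike.re ⟪w, P w⟫_ℂ = ∑ y ∈ K, ‖⟪ξ y, w⟫_ℂ‖ ^ 2 := by
      rw [hA w]; exact RCLike.ofReal_re _
    have h3 : ‖P w‖ ^ 2 = ∑ y ∈ K, ‖⟪ξ y, w⟫_ℂ‖ ^ 2 := by
      rw [← inner_self_eq_norm_sq (𝕜 := ℂ), hB w]; exact RCLike.ofReal_re _
    rw [h0, h2, h3]; ring
  have hbessel : ∀ (w : lp (fun _ : G => ℂ) 2), ∑ y ∈ K, ‖⟪ξ y, w⟫_ℂ‖ ^ 2 ≤ ‖w‖ ^ 2 := by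
    intro w
    have := hcontract w
    nlinarith [sq_nonneg ‖w - P w‖]
  have hcontr : ∀ (w : lp (fun _ : G => ℂ) 2), ‖w - P w‖ ≤ ‖w‖ := by
    intro w
    have h1 : ‖w - P w‖ ^ 2 ≤ ‖w‖ ^ 2 := by
      have := hcontract w
      have h2 : (0:ℝ) ≤ ∑ y ∈ K, ‖⟪ξ y, w⟫_ℂ‖ ^ 2 :=
        Finset.sum_nonneg fun _ _ => sq_nonneg _
      linarith
    have := Real.sqrt_le_sqrt h1
    rwa [Real.sqrt_sq (norm_nonneg _), Real.sqrt_sq (norm_nonneg _)] at this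
  -- shift lemmas
  have hshift : ∀ y x : G, κ (s⁻¹ * x) = κ y ↔ κ x = κ (s * y) := by
    intro y x
    rw [← hmem' y (s⁻¹ * x), ← hmem' (s * y) x, Set.mem_smul_set_iff_inv_smul_mem,
      Set.mem_smul_set_iff_inv_smul_mem, smul_eq_mul, smul_eq_mul, mul_inv_rev, mul_assoc]
  have hshift2 : ∀ y u : G, κ (s * u) = κ (s * y) ↔ κ u = κ y := by
    intro y u
    have := hshift y (s * u)
    rw [inv_mul_cancel_left] at this
    exact this.symm
  -- coordinates of lam s (ξ y)
  have hu : ∀ y x : G, (lam s (ξ y) : ∀ _ : G, ℂ) x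
      = if κ x = κ (s * y) then (φ (s⁻¹ * x) : ℂ) else 0 := by
    intro y x
    rw [hlam, hξc]
    by_cases h : κ x = κ (s * y)
    · rw [if_pos ((hshift y x).2 h), if_pos h]
    · rw [if_neg (fun hh => h ((hshift y x).1 hh)), if_neg h]
  set W2 : Finset G := W ∪ W.image (fun t => s * t) with hW2def
  have hWW2 : W ⊆ W2 := Finset.subset_union_left
  have hu0 : ∀ y x, x ∉ W2 → (lam s (ξ y) : ∀ _ : G, ℂ) x = 0 := by
    intro y x hx
    have hsx : s⁻¹ * x ∉ W := by
      intro h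
      exact hx (Finset.mem_union_right _ (Finset.mem_image.2 ⟨s⁻¹ * x, h, by group⟩))
    rw [hu]
    simp [hφW _ hsx]
  -- P of lam s (ξ y) is the rank-one piece at κ (s*y)
  have hPu : ∀ y : G, P (lam s (ξ y))
      = ⟪ξ (κ (s * y)), lam s (ξ y)⟫_ℂ • ξ (κ (s * y)) := by
    intro y
    rw [hP, Finset.sum_eq_single (κ (s * y))]
    · intro z hz hne
      have hz0 : ⟪ξ z, lam s (ξ y)⟫_ℂ = 0 := by
        rw [lp_inner_eq_sum _ _ ∅ ?_]
        · simp
        · intro x _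
          by_cases hx : κ x = κ (s * y)
          · left
            rw [hξc]
            refine if_neg fun hh => hne ?_
            exact (hκself z hz).symm.trans (hh.symm.trans hx)
          · right
            rw [hu]
            exact if_neg hx
      rw [hz0, zero_smul]
    · intro h; exact absurd (hκK (s * y)) h
  -- the difference vector δ y and its norm bound
  set Df : Finset G := F ∆ (F.image (· * s)) with hDf
  have hDnonneg : (0:ℝ) ≤ (Df.card : ℝ) / (F.card : ℝ) :=
    div_nonneg (Nat.cast_nonneg _) (Nat.cast_nonneg _)
  have hδnorm : ∀ y : G, ‖lam s (ξ y) - ξ (κ (s * y))‖ ^ 2 ≤ (Df.card : ℝ) / (F.card : ℝ) := by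
    intro y
    have hδc : ∀ x : G, ((lam s (ξ y) - ξ (κ (s * y)) : lp (fun _ : G => ℂ) 2) : ∀ _ : G, ℂ) x
        = if κ x = κ (s * y) then ((φ (s⁻¹ * x) - φ x : ℝ) : ℂ) else 0 := by
      intro x
      rw [lp.coeFn_sub, Pi.sub_apply, hu, hξc, hκκ]
      by_cases h : κ x = κ (s * y)
      · rw [if_pos h, if_pos h, if_pos h]; push_cast; ring
      · rw [if_neg h, if_neg h, if_neg h, sub_zero]
    have hδ0 : ∀ x, x ∉ W2 → ((lam s (ξ y) - ξ (κ (s * y)) : lp (fun _ : G => ℂ) 2) : ∀ _ : G, ℂ) x = 0 := by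
      intro x hx
      rw [lp.coeFn_sub, Pi.sub_apply, hu0 y x hx, hξ0 _ x (fun h => hx (hWW2 h)), sub_zero]
    have hn : ‖lam s (ξ y) - ξ (κ (s * y))‖ ^ 2
        = ∑ x ∈ W2, (if κ x = κ (s * y) then (φ (s⁻¹ * x) - φ x) ^ 2 else 0) := by
      rw [← inner_self_eq_norm_sq (𝕜 := ℂ),
        lp_inner_eq_sum _ _ W2 (fun x hx => Or.inl (hδ0 x hx))]
      have : ∀ x ∈ W2, (starRingEnd ℂ) (((lam s (ξ y) - ξ (κ (s * y)) : lp (fun _ : G => ℂ) 2) : ∀ _ : G, ℂ) x)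
          * (((lam s (ξ y) - ξ (κ (s * y)) : lp (fun _ : G => ℂ) 2) : ∀ _ : G, ℂ) x)
          = (((if κ x = κ (s * y) then (φ (s⁻¹ * x) - φ x) ^ 2 else 0 : ℝ)) : ℂ) := by
        intro x _
        rw [hδc x]
        by_cases h : κ x = κ (s * y)
        · simp only [if_pos h]
          rw [Complex.conj_ofReal]
          push_cast; ring
        · simp [h]
      rw [Finset.sum_congr rfl this, ← Complex.ofReal_sum]
      exact RCLike.ofReal_re _
    rw [hn]
    -- pointwise bound
    have hpt : ∀ x : G, (φ (s⁻¹ * x) - φ x) ^ 2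
        ≤ ((K ∩ Df.image (· * (s⁻¹ * x))).card : ℝ) / (F.card : ℝ) := by
      intro x
      have himg : F.image (· * x) = (F.image (· * s)).image (· * (s⁻¹ * x)) := by
        rw [Finset.image_image]
        congr 1
        ext f
        simp [Function.comp, mul_assoc]
      have hb : φ x = Real.sqrt (((K ∩ (F.image (· * s)).image (· * (s⁻¹ * x))).card : ℝ) / (F.card : ℝ)) := by
        rw [hφ, himg]
      rw [hφ (s⁻¹ * x), hb]
      refine le_trans (sqrt_sub_sqrt_sq_le (div_nonneg (Nat.cast_nonneg _) (Nat.cast_nonneg _))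
        (div_nonneg (Nat.cast_nonneg _) (Nat.cast_nonneg _))) ?_
      rw [div_sub_div_same, abs_div, abs_of_pos hFpos]
      have hcard := card_inter_abs_le K (F.image (· * (s⁻¹ * x)))
        ((F.image (· * s)).image (· * (s⁻¹ * x)))
      rw [← Finset.image_symmDiff _ _ (mul_left_injective (s⁻¹ * x))] at hcard
      exact (div_le_div_iff_of_pos_right hFpos).2 hcard
    calc ∑ x ∈ W2, (if κ x = κ (s * y) then (φ (s⁻¹ * x) - φ x) ^ 2 else 0)
        ≤ ∑ x ∈ W2, (if κ x = κ (s * y) then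
            ((K ∩ Df.image (· * (s⁻¹ * x))).card : ℝ) / (F.card : ℝ) else 0) := by
          refine Finset.sum_le_sum fun x _ => ?_
          by_cases h : κ x = κ (s * y)
          · rw [if_pos h, if_pos h]; exact hpt x
          · rw [if_neg h, if_neg h]
      _ = ∑ u ∈ W2.image (fun t => s⁻¹ * t), (if κ u = κ y then
            ((K ∩ Df.image (· * u)).card : ℝ) / (F.card : ℝ) else 0) := by
          have h1 : W2 = (W2.image (fun t => s⁻¹ * t)).image (fun u => s * u) := by
            rw [Finset.image_image]
            have h2 : ((fun u => s * u) ∘ fun t => s⁻¹ * t) = id := by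
              funext t; simp
            rw [h2, Finset.image_id]
          conv_lhs => rw [h1]
          rw [Finset.sum_image (fun a _ b _ h => by exact mul_left_cancel h)]
          refine Finset.sum_congr rfl fun u _ => ?_
          rw [inv_mul_cancel_left]
          by_cases h : κ u = κ y
          · rw [if_pos h, if_pos ((hshift2 y u).2 h)]
          · rw [if_neg h, if_neg (fun hh => h ((hshift2 y u).1 hh))]
      _ ≤ ∑ u ∈ (W2.image (fun t => s⁻¹ * t)) ∪ (Df⁻¹ * K), (if κ u = κ y then
            ((K ∩ Df.image (· * u)).card : ℝ) / (F.card : ℝ) else 0) := by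
          refine Finset.sum_le_sum_of_subset_of_nonneg Finset.subset_union_left fun u _ _ => ?_
          by_cases h : κ u = κ y
          · rw [if_pos h]; exact div_nonneg (Nat.cast_nonneg _) (Nat.cast_nonneg _)
          · rw [if_neg h]
      _ = (∑ u ∈ (W2.image (fun t => s⁻¹ * t)) ∪ (Df⁻¹ * K), (if κ u = κ y then
            ((K ∩ Df.image (· * u)).card : ℝ) else 0)) / (F.card : ℝ) := by
          rw [Finset.sum_div]
          refine Finset.sum_congr rfl fun u _ => ?_
          by_cases h : κ u = κ y <;> simp [h]
      _ = (Df.card : ℝ) / (F.card : ℝ) := by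
          rw [hcountR Df y _ (fun x _ hne => Finset.mem_union_right _ (hWmem Df x hne))]
  -- the corner vectors are pairwise orthogonal
  have hηcoordzero : ∀ y x : G, κ x ≠ κ (s * y) →
      ((lam s (ξ y) - P (lam s (ξ y)) : lp (fun _ : G => ℂ) 2) : ∀ _ : G, ℂ) x = 0 := by
    intro y x h
    rw [hPu y, lp.coeFn_sub, Pi.sub_apply, lp.coeFn_smul, Pi.smul_apply, hu, hξc, hκκ,
      if_neg h, if_neg h]
    simp
  have hηorth : ∀ y ∈ K, ∀ z ∈ K, y ≠ z →
      ⟪lam s (ξ y) - P (lam s (ξ y)), lam s (ξ z) - P (lam s (ξ z))⟫_ℂ = 0 := by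
    intro y hy z hz hne
    have hκne : κ (s * y) ≠ κ (s * z) := by
      intro h
      exact hne ((hκself y hy).symm.trans (((hshift2 z y).1 h).trans (hκself z hz)))
    rw [lp_inner_eq_sum _ _ ∅ ?_]
    · simp
    · intro x _
      by_cases hx : κ x = κ (s * y)
      · right; exact hηcoordzero z x (fun hh => hκne (hx.symm.trans hh))
      · left; exact hηcoordzero y x hx
  have hηnorm : ∀ y : G, ‖lam s (ξ y) - P (lam s (ξ y))‖ ^ 2 ≤ (Df.card : ℝ) / (F.card : ℝ) := by
    intro y
    have he : lam s (ξ y) - P (lam s (ξ y))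
        = (lam s (ξ y) - ξ (κ (s * y))) - P (lam s (ξ y) - ξ (κ (s * y))) := by
      rw [map_sub, hPxi _ (hκK (s * y))]
      abel
    rw [he]
    have h1 := hcontr (lam s (ξ y) - ξ (κ (s * y)))
    have h2 := hδnorm y
    nlinarith [norm_nonneg (lam s (ξ y) - ξ (κ (s * y))),
      norm_nonneg ((lam s (ξ y) - ξ (κ (s * y))) - P (lam s (ξ y) - ξ (κ (s * y))))]
  -- assembly
  refine ContinuousLinearMap.opNorm_le_bound _ (Real.sqrt_nonneg _) fun v => ?_
  have hTv : ((1 - P) * lam s * P) v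
      = ∑ y ∈ K, ⟪ξ y, v⟫_ℂ • (lam s (ξ y) - P (lam s (ξ y))) := by
    have h0 : ((1 - P) * lam s * P) v = (1 - P) (lam s (P v)) := rfl
    rw [h0, hP v, map_sum, map_sum]
    refine Finset.sum_congr rfl fun y hy => ?_
    rw [map_smul, map_smul, ContinuousLinearMap.sub_apply, ContinuousLinearMap.one_apply]
  have hnormsq : ‖∑ y ∈ K, ⟪ξ y, v⟫_ℂ • (lam s (ξ y) - P (lam s (ξ y)))‖ ^ 2
      = ∑ y ∈ K, ‖⟪ξ y, v⟫_ℂ‖ ^ 2 * ‖lam s (ξ y) - P (lam s (ξ y))‖ ^ 2 := by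
    rw [← inner_self_eq_norm_sq (𝕜 := ℂ), sum_inner]
    have hterm : ∀ y ∈ K, ⟪⟪ξ y, v⟫_ℂ • (lam s (ξ y) - P (lam s (ξ y))),
          ∑ z ∈ K, ⟪ξ z, v⟫_ℂ • (lam s (ξ z) - P (lam s (ξ z)))⟫_ℂ
        = ((‖⟪ξ y, v⟫_ℂ‖ ^ 2 * ‖lam s (ξ y) - P (lam s (ξ y))‖ ^ 2 : ℝ) : ℂ) := by
      intro y hy
      rw [inner_smul_left, inner_sum, Finset.sum_eq_single y]
      · rw [inner_smul_right, inner_self_eq_norm_sq_to_K, ← mul_assoc, RCLike.conj_mul (K := ℂ)]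
        norm_cast
      · intro z hz hne
        rw [inner_smul_right, hηorth y hy z hz (Ne.symm hne), mul_zero]
      · intro h; exact absurd hy h
    rw [Finset.sum_congr rfl hterm, ← Complex.ofReal_sum]
    exact RCLike.ofReal_re _
  rw [hTv]
  have hfin : ‖∑ y ∈ K, ⟪ξ y, v⟫_ℂ • (lam s (ξ y) - P (lam s (ξ y)))‖ ^ 2
      ≤ ((Df.card : ℝ) / (F.card : ℝ)) * ‖v‖ ^ 2 := by
    rw [hnormsq]
    calc ∑ y ∈ K, ‖⟪ξ y, v⟫_ℂ‖ ^ 2 * ‖lam s (ξ y) - P (lam s (ξ y))‖ ^ 2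
        ≤ ∑ y ∈ K, ‖⟪ξ y, v⟫_ℂ‖ ^ 2 * ((Df.card : ℝ) / (F.card : ℝ)) :=
          Finset.sum_le_sum fun y _ => mul_le_mul_of_nonneg_left (hηnorm y) (sq_nonneg _)
      _ = ((Df.card : ℝ) / (F.card : ℝ)) * ∑ y ∈ K, ‖⟪ξ y, v⟫_ℂ‖ ^ 2 := by
          rw [← Finset.sum_mul]; ring
      _ ≤ ((Df.card : ℝ) / (F.card : ℝ)) * ‖v‖ ^ 2 :=
          mul_le_mul_of_nonneg_left (hbessel v) hDnonneg
  have hc2 : Real.sqrt ((Df.card : ℝ) / (F.card : ℝ)) ^ 2 = (Df.card : ℝ) / (F.card : ℝ) :=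
    Real.sq_sqrt hDnonneg
  have hfin2 : ‖∑ y ∈ K, ⟪ξ y, v⟫_ℂ • (lam s (ξ y) - P (lam s (ξ y)))‖ ^ 2
      ≤ (Real.sqrt ((Df.card : ℝ) / (F.card : ℝ)) * ‖v‖) ^ 2 := by
    rw [mul_pow, hc2]; exact hfin
  have hle := Real.sqrt_le_sqrt hfin2
  rwa [Real.sqrt_sq (norm_nonneg _),
    Real.sqrt_sq (mul_nonneg (Real.sqrt_nonneg _) (norm_nonneg _))] at hle
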